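/- Consider the WFSA construction for a 2-window QRNN: states {q_0} ∪ {p_α : α ∈ Σ} ∪ {q_α : α ∈ Σ} over the real semiring, with q_0 initial (weight 1); transitions q_0→p_α consuming α with weight 1, p_α→p_β consuming β with weight 1, p_α→q_β consuming β with weight μ_α(β), q_α→q_β consuming β with weight φ_α(β); every q_α final with weight 1. Then for input x = x_1…x_n with n ≥ 2, the total score equals c_n, where c is defined by c_1 = 0 and c_t = φ_{x_{t-1}}(x_t)·c_{t-1} + μ_{x_{t-1}}(x_t) for t ≥ 2. -/
import Mathlib


/-- States of the 2-window QRNN WFSA: `Sum.inl () = q_0`,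
`Sum.inr (Sum.inl α) = p_α`, `Sum.inr (Sum.inr α) = q_α`. -/
abbrev QrnnState (A : Type*) := Unit ⊕ A ⊕ A

/-- Transition weights of the QRNN WFSA over the real semiring:
`q_0 → p_α` consuming `α` with weight `1`, `p_α → p_β` consuming `β` with
weight `1`, `p_α → q_β` consuming `β` with weight `μ_α(β)`, and
`q_α → q_β` consuming `β` with weight `φ_α(β)`; all other transitions `0`. -/
def qrnnTau {A : Type*} [DecidableEq A] (μ φ : A → A → ℝ) :
    QrnnState A → QrnnState A → A → ℝ := fun q q' a =>
  match q, q' with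
  | Sum.inl _, Sum.inr (Sum.inl β) => if β = a then 1 else 0
  | Sum.inr (Sum.inl _), Sum.inr (Sum.inl β) => if β = a then 1 else 0
  | Sum.inr (Sum.inl α), Sum.inr (Sum.inr β) => if β = a then μ α β else 0
  | Sum.inr (Sum.inr α), Sum.inr (Sum.inr β) => if β = a then φ α β else 0
  | _, _ => 0

/-- Score of `x_1 … x_n` under the QRNN WFSA: `q_0` is the only initial state
(weight `1`), every `q_α` is final with weight `1`. -/
noncomputable def qrnnScore {A : Type*} [DecidableEq A] [Fintype A]
    (μ φ : A → A → ℝ) (x : ℕ → A) (n : ℕ) : ℝ :=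
  ∑ p : Fin (n + 1) → QrnnState A,
    (if p 0 = Sum.inl () then (1 : ℝ) else 0) *
      (∏ i : Fin n, qrnnTau μ φ (p i.castSucc) (p i.succ) (x (i.1 + 1))) *
      (match p (Fin.last n) with | Sum.inr (Sum.inr _) => (1 : ℝ) | _ => 0)


noncomputable def fwd {A : Type*} [DecidableEq A] [Fintype A]
    (μ φ : A → A → ℝ) (x : ℕ → A) : ℕ → QrnnState A → ℝ
  | 0, s => if s = Sum.inl () then 1 else 0
  | (n+1), s => ∑ s' : QrnnState A, fwd μ φ x n s' * qrnnTau μ φ s' s (x (n+1))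

def snocEquiv (S : Type*) (n : ℕ) : ((Fin (n+1) → S) × S) ≃ (Fin (n+2) → S) where
  toFun qs := Fin.snoc qs.1 qs.2
  invFun p := (Fin.init p, p (Fin.last _))
  left_inv := fun ⟨q, s⟩ => by simp
  right_inv := fun p => by simp

lemma pathSum {A : Type*} [DecidableEq A] [Fintype A]
    (μ φ : A → A → ℝ) (x : ℕ → A) (n : ℕ) (f : QrnnState A → ℝ) :
    (∑ p : Fin (n + 1) → QrnnState A,
      (if p 0 = Sum.inl () then (1 : ℝ) else 0) *
        (∏ i : Fin n, qrnnTau μ φ (p i.castSucc) (p i.succ) (x (i.1 + 1))) *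
        f (p (Fin.last n)))
    = ∑ s : QrnnState A, fwd μ φ x n s * f s := by
  induction n generalizing f with
  | zero =>
      rw [← (Equiv.funUnique (Fin 1) (QrnnState A)).symm.sum_comp]
      simp [fwd, Equiv.funUnique, Fin.last, ite_mul]
  | succ n ih =>
      rw [← (snocEquiv (QrnnState A) n).sum_comp]
      rw [Fintype.sum_prod_type]
      have key : ∀ (q : Fin (n+1) → QrnnState A) (s : QrnnState A),
          (if (Fin.snoc q s : Fin (n+2) → QrnnState A) 0 = Sum.inl () then (1:ℝ) else 0) *
            (∏ i : Fin (n+1), qrnnTau μ φ ((Fin.snoc q s : Fin (n+2) → QrnnState A) i.castSucc)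
              ((Fin.snoc q s : Fin (n+2) → QrnnState A) i.succ) (x (i.1 + 1))) *
            f ((Fin.snoc q s : Fin (n+2) → QrnnState A) (Fin.last (n+1)))
          = (if q 0 = Sum.inl () then (1:ℝ) else 0) *
            (∏ i : Fin n, qrnnTau μ φ (q i.castSucc) (q i.succ) (x (i.1 + 1))) *
            (qrnnTau μ φ (q (Fin.last n)) s (x (n+1)) * f s) := by
        intro q s
        rw [Fin.prod_univ_castSucc]
        have h0 : (Fin.snoc q s : Fin (n+2) → QrnnState A) 0 = q 0 := by
          have : (0 : Fin (n+2)) = Fin.castSucc 0 := rfl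
          rw [this, Fin.snoc_castSucc]
        have hlast : (Fin.snoc q s : Fin (n+2) → QrnnState A) (Fin.last (n+1)) = s :=
          Fin.snoc_last _ _
        have hcast : ∀ i : Fin (n+1),
            (Fin.snoc q s : Fin (n+2) → QrnnState A) i.castSucc = q i :=
          fun i => Fin.snoc_castSucc _ _ _
        have hsucc : ∀ i : Fin n,
            (Fin.snoc q s : Fin (n+2) → QrnnState A) i.castSucc.succ = q i.succ := by
          intro i
          rw [Fin.succ_castSucc, Fin.snoc_castSucc]
        rw [h0, hlast, hcast]
        have hprod : ∀ i : Fin n,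
            qrnnTau μ φ ((Fin.snoc q s : Fin (n+2) → QrnnState A) i.castSucc.castSucc)
              ((Fin.snoc q s : Fin (n+2) → QrnnState A) i.castSucc.succ)
              (x ((i.castSucc : Fin (n+1)).1 + 1))
            = qrnnTau μ φ (q i.castSucc) (q i.succ) (x (i.1 + 1)) := by
          intro i
          rw [hcast, hsucc]
          rfl
        rw [Finset.prod_congr rfl (fun i _ => hprod i)]
        have h2 : ((Fin.last n).succ : Fin (n+2)) = Fin.last (n+1) := rfl
        rw [h2, hlast]
        simp [Fin.last]
        split <;> ring
      calc
        _ = ∑ q : Fin (n+1) → QrnnState A, ∑ s : QrnnState A,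
              (if q 0 = Sum.inl () then (1:ℝ) else 0) *
                (∏ i : Fin n, qrnnTau μ φ (q i.castSucc) (q i.succ) (x (i.1 + 1))) *
                (qrnnTau μ φ (q (Fin.last n)) s (x (n+1)) * f s) := by
          refine Finset.sum_congr rfl fun q _ => Finset.sum_congr rfl fun s _ => key q s
        _ = ∑ s : QrnnState A, ∑ q : Fin (n+1) → QrnnState A,
              (if q 0 = Sum.inl () then (1:ℝ) else 0) *
                (∏ i : Fin n, qrnnTau μ φ (q i.castSucc) (q i.succ) (x (i.1 + 1))) *
                (qrnnTau μ φ (q (Fin.last n)) s (x (n+1)) * f s) := Finset.sum_comm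
        _ = ∑ s : QrnnState A, ∑ s' : QrnnState A,
              fwd μ φ x n s' * (qrnnTau μ φ s' s (x (n+1)) * f s) := by
          refine Finset.sum_congr rfl fun s _ => ?_
          exact ih (fun s' => qrnnTau μ φ s' s (x (n+1)) * f s)
        _ = ∑ s : QrnnState A, fwd μ φ x (n+1) s * f s := by
          refine Finset.sum_congr rfl fun s _ => ?_
          rw [fwd, Finset.sum_mul]
          exact Finset.sum_congr rfl fun s' _ => by ring

lemma fwd_formula {A : Type*} [DecidableEq A] [Fintype A]
    (μ φ : A → A → ℝ) (x : ℕ → A) (c : ℕ → ℝ)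
    (h1 : c 1 = 0)
    (hrec : ∀ t, 2 ≤ t → c t = φ (x (t - 1)) (x t) * c (t - 1) + μ (x (t - 1)) (x t))
    (n : ℕ) (hn : 1 ≤ n) :
    fwd μ φ x n (Sum.inl ()) = 0 ∧
    (∀ α : A, fwd μ φ x n (Sum.inr (Sum.inl α)) = if α = x n then 1 else 0) ∧
    (∀ α : A, fwd μ φ x n (Sum.inr (Sum.inr α)) = if α = x n then c n else 0) := by
  induction n with
  | zero => omega
  | succ n ih =>
      rcases Nat.eq_or_lt_of_le hn with h | h
      · -- n = 0
        have hn0 : n = 0 := by omega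
        subst hn0
        refine ⟨?_, ?_, ?_⟩
        · simp [fwd, qrnnTau, Fintype.sum_sum_type]
        · intro α
          simp [fwd, qrnnTau, Fintype.sum_sum_type]
        · intro α
          simp [fwd, qrnnTau, Fintype.sum_sum_type, h1]
      · have hn1 : 1 ≤ n := by omega
        obtain ⟨hq0, hp, hq⟩ := ih hn1
        refine ⟨?_, ?_, ?_⟩
        · simp [fwd, qrnnTau, Fintype.sum_sum_type]
        · intro α
          simp only [fwd, Fintype.sum_sum_type, qrnnTau]
          simp [hq0, hp, hq, Finset.sum_ite_eq', mul_ite]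
        · intro α
          simp only [fwd, Fintype.sum_sum_type, qrnnTau]
          simp only [hq0, hp, hq]
          by_cases hα : α = x (n+1)
          · subst hα
            have := hrec (n+1) (by omega)
            simp only [Nat.add_sub_cancel] at this
            simp [Finset.sum_ite_eq', ite_mul, this]
            ring
          · simp [Finset.sum_ite_eq', ite_mul, hα]

/-- Appendix A construction: for inputs of length `n ≥ 2`, the total score of
the 2-window QRNN WFSA equals `c_n`, where `c_1 = 0` and
`c_t = φ_{x_{t-1}}(x_t)·c_{t-1} + μ_{x_{t-1}}(x_t)` for `t ≥ 2`. -/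
theorem stmt11 {A : Type*} [DecidableEq A] [Fintype A] (μ φ : A → A → ℝ)
    (x : ℕ → A) (n : ℕ) (hn : 2 ≤ n) (c : ℕ → ℝ)
    (h1 : c 1 = 0)
    (hrec : ∀ t, 2 ≤ t → c t = φ (x (t - 1)) (x t) * c (t - 1) + μ (x (t - 1)) (x t)) :
    qrnnScore μ φ x n = c n := by
  have hps := pathSum μ φ x n
    (fun s => match s with | Sum.inr (Sum.inr _) => (1 : ℝ) | _ => 0)
  rw [qrnnScore, hps]
  obtain ⟨hq0, hp, hq⟩ := fwd_formula μ φ x c h1 hrec n (by omega)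
  rw [Fintype.sum_sum_type, Fintype.sum_sum_type]
  simp [hq0, hp, hq, ite_mul, Finset.sum_ite_eq']
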